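/- arXiv:2001.02714 — 2 statements merged into one kernel-verified Lean document; each statement's English description precedes it below -/
import Mathlib

section
/- Suppose Σ₀ satisfies the Lyapunov equation Σ₀ = A_z' Σ₀ (A_z')ᵀ + Q' with ρ(A_z') < 1, and Σ_∞ ≥ 0 satisfies the Riccati equation Σ_∞ = A_z' Σ_∞ (A_z')ᵀ + Q' − (A_z' Σ_∞ C_zᵀ + S)(C_z Σ_∞ C_zᵀ + R)^{-1}(A_z' Σ_∞ C_zᵀ + S)ᵀ with C_z Σ_∞ C_zᵀ + R positive definite. Then Σ₀ − Σ_∞ ≥ 0. -/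
/-!
With `K = A Σ_∞ C_zᵀ + S` and `M = C_z Σ_∞ C_zᵀ + R ≻ 0`, subtracting the Riccati equation from
the Lyapunov equation shows that `Δ = Σ₀ - Σ_∞` solves `Δ = A Δ Aᵀ + W` with `W = K M⁻¹ Kᵀ ⪰ 0`.
Iterating, `Δ - Aᵏ Δ (Aᵏ)ᵀ = ∑_{j<k} Aʲ W (Aʲ)ᵀ ⪰ 0`, and since `ρ(A) < 1` Gelfand's formula
gives `Aᵏ → 0`, so `Δ` is a limit of positive semidefinite matrices.
-/

open Matrix Filter Topology

noncomputable def specRad {n : ℕ} (A : Matrix (Fin n) (Fin n) ℝ) : ENNReal :=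
  spectralRadius ℂ (A.map (algebraMap ℝ ℂ))

theorem spectrum.tendsto_pow_atTop_nhds_zero_of_spectralRadius_lt_one {A : Type*} [NormedRing A]
    [NormedAlgebra ℂ A] [CompleteSpace A] {a : A} (h : spectralRadius ℂ a < 1) :
    Tendsto (a ^ ·) atTop (𝓝 0) := by
  obtain ⟨r, hr, hr1⟩ := ENNReal.lt_iff_exists_nnreal_btwn.1 h
  have hbound : ∀ᶠ k : ℕ in atTop, ‖a ^ k‖₊ ≤ r ^ k := by
    filter_upwards [(pow_nnnorm_pow_one_div_tendsto_nhds_spectralRadius a).eventually_lt_const hr,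
      eventually_ge_atTop 1] with k hk hk1
    have hk0 : (0 : ℝ) < k := by exact_mod_cast hk1
    rw [one_div, ← ENNReal.coe_rpow_of_nonneg _ (inv_nonneg.2 hk0.le), ENNReal.coe_lt_coe,
      NNReal.rpow_inv_lt_iff hk0, NNReal.rpow_natCast] at hk
    exact hk.le
  refine squeeze_zero_norm' (hbound.mono fun k hk => ?_)
    (tendsto_pow_atTop_nhds_zero_of_lt_one r.2 (by exact_mod_cast hr1))
  exact_mod_cast hk

theorem eq_pow_mul_mul_star_pow_add_sum {α : Type*} [Semiring α] [StarRing α] {a x w : α}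
    (h : x = a * x * star a + w) (k : ℕ) :
    x = a ^ k * x * star (a ^ k) + ∑ j ∈ Finset.range k, a ^ j * w * star (a ^ j) := by
  induction k with
  | zero => simp
  | succ k ih =>
    nth_rewrite 1 [ih, h]
    rw [Finset.sum_range_succ, pow_succ, star_mul]
    simp only [mul_add, add_mul, mul_assoc, add_assoc]
    abel

namespace Matrix

open scoped Matrix.Norms.L2Operator in
theorem tendsto_pow_atTop_nhds_zero_of_specRad_lt_one {m : ℕ} {A : Matrix (Fin m) (Fin m) ℝ}
    (h : specRad A < 1) : Tendsto (A ^ ·) atTop (𝓝 0) := by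
  have hre (k : ℕ) : ((A.map (algebraMap ℝ ℂ)) ^ k).map Complex.re = A ^ k := by
    rw [← RingHom.mapMatrix_apply, ← map_pow]
    ext
    simp
  simpa only [Function.comp_def, id_eq, hre, Matrix.map_zero _ Complex.zero_re] using
    ((continuous_id.matrix_map Complex.continuous_re).tendsto 0).comp
      (spectrum.tendsto_pow_atTop_nhds_zero_of_spectralRadius_lt_one h)

variable {n R : Type*} [Ring R] [PartialOrder R] [StarRing R] [TopologicalSpace R]
  [IsTopologicalRing R] [ContinuousStar R] [OrderClosedTopology R]

theorem isClosed_setOf_posSemidef : IsClosed {M : Matrix n n R | M.PosSemidef} := by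
  have hHerm : IsClosed {M : Matrix n n R | M.IsHermitian} :=
    isClosed_eq continuous_id.matrix_conjTranspose continuous_id
  have hForm (x : n →₀ R) : IsClosed {M : Matrix n n R |
      0 ≤ x.sum fun i xi ↦ x.sum fun j xj ↦ star xi * M i j * xj} :=
    isClosed_le continuous_const (by unfold Finsupp.sum; fun_prop)
  simpa only [PosSemidef, Set.ofPred_and, Set.ofPred_forall] using
    hHerm.inter (isClosed_iInter hForm)

theorem PosSemidef.of_eq_mul_mul_conjTranspose_add [Fintype n] [DecidableEq n] [AddLeftMono R]
    {A W Δ : Matrix n n R} (hA : Tendsto (A ^ ·) atTop (𝓝 0)) (hW : W.PosSemidef)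
    (hΔ : Δ = A * Δ * Aᴴ + W) : Δ.PosSemidef := by
  have hpartial (k : ℕ) : (Δ - A ^ k * Δ * (A ^ k)ᴴ).PosSemidef := by
    have hiter := eq_pow_mul_mul_star_pow_add_sum hΔ k
    rw [← sub_eq_iff_eq_add'] at hiter
    rw [← star_eq_conjTranspose, hiter]
    exact posSemidef_sum _ fun j _ => hW.mul_mul_conjTranspose_same (A ^ j)
  have hlim : Tendsto (fun k : ℕ => Δ - A ^ k * Δ * (A ^ k)ᴴ) atTop (𝓝 Δ) := by
    simpa using tendsto_const_nhds.sub ((((continuous_id.matrix_mul continuous_const).matrix_mul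
      continuous_id.matrix_conjTranspose).tendsto 0).comp hA)
  exact isClosed_setOf_posSemidef.mem_of_tendsto hlim (Eventually.of_forall hpartial)

end Matrix

theorem stmt_8_general {n p : ℕ}
    (Az' : Matrix (Fin n) (Fin n) ℝ) (hρ : specRad Az' < 1)
    (Q' : Matrix (Fin n) (Fin n) ℝ)
    (Cz : Matrix (Fin p) (Fin n) ℝ)
    (S : Matrix (Fin n) (Fin p) ℝ)
    (R : Matrix (Fin p) (Fin p) ℝ)
    (Sigma0 Sinf : Matrix (Fin n) (Fin n) ℝ)
    (hLyap : Sigma0 = Az' * Sigma0 * Az'ᵀ + Q')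
    (hInnov : (Cz * Sinf * Czᵀ + R).PosDef)
    (hRic : Sinf = Az' * Sinf * Az'ᵀ + Q' -
      (Az' * Sinf * Czᵀ + S) * (Cz * Sinf * Czᵀ + R)⁻¹ * (Az' * Sinf * Czᵀ + S)ᵀ) :
    (Sigma0 - Sinf).PosSemidef := by
  set K := Az' * Sinf * Czᵀ + S
  set M := Cz * Sinf * Czᵀ + R
  have hW : (K * M⁻¹ * Kᵀ).PosSemidef := by
    simpa only [conjTranspose_eq_transpose_of_trivial] using
      hInnov.inv.posSemidef.mul_mul_conjTranspose_same K
  refine PosSemidef.of_eq_mul_mul_conjTranspose_add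
    (tendsto_pow_atTop_nhds_zero_of_specRad_lt_one hρ) hW ?_
  rw [conjTranspose_eq_transpose_of_trivial]
  nth_rewrite 1 [hLyap, hRic]
  noncomm_ring

theorem stmt_8 {n p : ℕ}
    (Az' : Matrix (Fin n) (Fin n) ℝ) (hρ : specRad Az' < 1)
    (Q' : Matrix (Fin n) (Fin n) ℝ) (hQ' : Q'.PosSemidef)
    (Cz : Matrix (Fin p) (Fin n) ℝ)
    (S : Matrix (Fin n) (Fin p) ℝ)
    (R : Matrix (Fin p) (Fin p) ℝ) (hR : R.PosDef)
    (Sigma0 Sinf : Matrix (Fin n) (Fin n) ℝ)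
    (hSinfPSD : Sinf.PosSemidef)
    (hLyap : Sigma0 = Az' * Sigma0 * Az'ᵀ + Q')
    (hInnov : (Cz * Sinf * Czᵀ + R).PosDef)
    (hRic : Sinf = Az' * Sinf * Az'ᵀ + Q' -
      (Az' * Sinf * Czᵀ + S) * (Cz * Sinf * Czᵀ + R)⁻¹ * (Az' * Sinf * Czᵀ + S)ᵀ) :
    (Sigma0 - Sinf).PosSemidef :=
  stmt_8_general Az' hρ Q' Cz S R Sigma0 Sinf hLyap hInnov hRic
end

section
/- Consider the time-invariant observer error covariance recursion Σ(k+1) = (A_z − L_z C_z) Σ(k) (A_z − L_z C_z)ᵀ + N(L_z), where L_z = [L₁; L₂], A_z = [[A, B C_c],[0, A_c]], C_z = [C, 0], and N(L_z) = [[Σ_w + L₁ Σ_v L₁ᵀ, L₁ Σ_v L₂ᵀ],[L₂ Σ_v L₁ᵀ, L₂ Σ_v L₂ᵀ]] with Σ_v positive definite. Then a matrix of the form Σ̃_∞ = [[P̃, 0],[0, 0]] is a fixed point of this recursion if and only if L₂ = 0 and P̃ = (A − L₁C) P̃ (A − L₁C)ᵀ + Σ_w + L₁ Σ_v L₁ᵀ.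 -/
open Matrix

/-- The `i`-th diagonal entry of `L * M * Lᴴ` is the quadratic form of `M` at the `i`-th row
of `L`. -/
theorem Matrix.PosDef.eq_zero_of_mul_mul_conjTranspose_eq_zero {m n R : Type*} [Fintype n]
    [CommRing R] [PartialOrder R] [StarRing R] {M : Matrix n n R} (hM : M.PosDef)
    {L : Matrix m n R} (h : L * M * Lᴴ = 0) : L = 0 := by
  funext i
  by_contra hi
  have hpos := hM.dotProduct_mulVec_pos (x := star (L i)) (star_ne_zero.mpr hi)
  have hdiag : star (star (L i)) ⬝ᵥ (M *ᵥ star (L i)) = (L * M * Lᴴ) i i := by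
    simp only [star_star, mul_apply, dotProduct, mulVec, conjTranspose_apply, Pi.star_apply,
      Finset.mul_sum, Finset.sum_mul, mul_assoc]
    exact Finset.sum_comm
  rw [hdiag, h] at hpos
  exact lt_irrefl _ hpos

theorem Matrix.fromBlocks_mul_fromBlocks_zero_mul_transpose {l m n α : Type*} [Fintype l]
    [Fintype m] [CommRing α] (A : Matrix l l α) (B : Matrix l m α) (C : Matrix n l α)
    (D : Matrix n m α) (P : Matrix l l α) :
    fromBlocks A B C D * fromBlocks P 0 0 (0 : Matrix m m α) * (fromBlocks A B C D)ᵀ =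
      fromBlocks (A * P * Aᵀ) (A * P * Cᵀ) (C * P * Aᵀ) (C * P * Cᵀ) := by
  simp only [fromBlocks_transpose, fromBlocks_multiply, Matrix.mul_zero, Matrix.zero_mul,
    add_zero]

theorem Matrix.fromBlocks_sub_fromRows_mul_fromCols_zero {l m n α : Type*} [Fintype m]
    [CommRing α]
    (A : Matrix l l α) (B : Matrix l n α) (D : Matrix n n α) (C : Matrix m l α)
    (L₁ : Matrix l m α) (L₂ : Matrix n m α) :
    fromBlocks A B 0 D - fromRows L₁ L₂ * fromCols C 0 =
      fromBlocks (A - L₁ * C) B (-(L₂ * C)) D := by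
  rw [fromRows_mul_fromCols, sub_eq_add_neg, fromBlocks_neg, fromBlocks_add]
  simp [sub_eq_add_neg]

theorem stmt_9_general {nx ny nc : ℕ}
    (A : Matrix (Fin nx) (Fin nx) ℝ) (C : Matrix (Fin ny) (Fin nx) ℝ)
    (BCc : Matrix (Fin nx) (Fin nc) ℝ) (Ac : Matrix (Fin nc) (Fin nc) ℝ)
    (Sw : Matrix (Fin nx) (Fin nx) ℝ)
    (Sv : Matrix (Fin ny) (Fin ny) ℝ) (hSv : Sv.PosDef)
    (L₁ : Matrix (Fin nx) (Fin ny) ℝ) (L₂ : Matrix (Fin nc) (Fin ny) ℝ)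
    (Az : Matrix (Fin nx ⊕ Fin nc) (Fin nx ⊕ Fin nc) ℝ)
    (hAz : Az = fromBlocks A BCc 0 Ac)
    (Cz : Matrix (Fin ny) (Fin nx ⊕ Fin nc) ℝ) (hCz : Cz = fromCols C 0)
    (Lz : Matrix (Fin nx ⊕ Fin nc) (Fin ny) ℝ) (hLz : Lz = fromRows L₁ L₂)
    (N : Matrix (Fin nx ⊕ Fin nc) (Fin nx ⊕ Fin nc) ℝ)
    (hN : N = fromBlocks (Sw + L₁ * Sv * L₁ᵀ) (L₁ * Sv * L₂ᵀ) (L₂ * Sv * L₁ᵀ) (L₂ * Sv * L₂ᵀ))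
    (Pt : Matrix (Fin nx) (Fin nx) ℝ) (hPt : Pt.PosSemidef)
    (St : Matrix (Fin nx ⊕ Fin nc) (Fin nx ⊕ Fin nc) ℝ)
    (hSt : St = fromBlocks Pt 0 0 0) :
    St = (Az - Lz * Cz) * St * (Az - Lz * Cz)ᵀ + N ↔
      (L₂ = 0 ∧ Pt = (A - L₁ * C) * Pt * (A - L₁ * C)ᵀ + Sw + L₁ * Sv * L₁ᵀ) := by
  subst hAz hCz hLz hN hSt
  rw [fromBlocks_sub_fromRows_mul_fromCols_zero, fromBlocks_mul_fromBlocks_zero_mul_transpose,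
    fromBlocks_add, fromBlocks_inj, ← add_assoc]
  constructor
  · rintro ⟨h11, -, -, h22⟩
    -- the lower-right block says `L₂ (C P̃ Cᵀ + Σ_v) L₂ᵀ = 0`
    have hpd : (C * Pt * Cᴴ + Sv).PosDef :=
      PosDef.posSemidef_add (hPt.mul_mul_conjTranspose_same C) hSv
    refine ⟨hpd.eq_zero_of_mul_mul_conjTranspose_eq_zero ?_, h11⟩
    rw [h22]
    simp only [conjTranspose_eq_transpose_of_trivial, transpose_neg, transpose_mul,
      Matrix.mul_add, Matrix.add_mul, Matrix.neg_mul, Matrix.mul_neg, neg_neg, Matrix.mul_assoc]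
  · rintro ⟨rfl, h11⟩
    simpa using h11

theorem stmt_9 {nx ny nc : ℕ}
    (A : Matrix (Fin nx) (Fin nx) ℝ) (C : Matrix (Fin ny) (Fin nx) ℝ)
    (BCc : Matrix (Fin nx) (Fin nc) ℝ) (Ac : Matrix (Fin nc) (Fin nc) ℝ)
    (Sw : Matrix (Fin nx) (Fin nx) ℝ) (hSw : Sw.PosSemidef)
    (Sv : Matrix (Fin ny) (Fin ny) ℝ) (hSv : Sv.PosDef)
    (L₁ : Matrix (Fin nx) (Fin ny) ℝ) (L₂ : Matrix (Fin nc) (Fin ny) ℝ)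
    (Az : Matrix (Fin nx ⊕ Fin nc) (Fin nx ⊕ Fin nc) ℝ)
    (hAz : Az = fromBlocks A BCc 0 Ac)
    (Cz : Matrix (Fin ny) (Fin nx ⊕ Fin nc) ℝ) (hCz : Cz = fromCols C 0)
    (Lz : Matrix (Fin nx ⊕ Fin nc) (Fin ny) ℝ) (hLz : Lz = fromRows L₁ L₂)
    (N : Matrix (Fin nx ⊕ Fin nc) (Fin nx ⊕ Fin nc) ℝ)
    (hN : N = fromBlocks (Sw + L₁ * Sv * L₁ᵀ) (L₁ * Sv * L₂ᵀ) (L₂ * Sv * L₁ᵀ) (L₂ * Sv * L₂ᵀ))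
    (Pt : Matrix (Fin nx) (Fin nx) ℝ) (hPt : Pt.PosSemidef)
    (St : Matrix (Fin nx ⊕ Fin nc) (Fin nx ⊕ Fin nc) ℝ)
    (hSt : St = fromBlocks Pt 0 0 0) :
    St = (Az - Lz * Cz) * St * (Az - Lz * Cz)ᵀ + N ↔
      (L₂ = 0 ∧ Pt = (A - L₁ * C) * Pt * (A - L₁ * C)ᵀ + Sw + L₁ * Sv * L₁ᵀ) :=
  stmt_9_general A C BCc Ac Sw Sv hSv L₁ L₂ Az hAz Cz hCz Lz hLz N hN Pt hPt St hSt
end
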